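/- Two-variable partition identity: for every integer n ≥ 1, the following identity holds in the field ℚ(t,u) of rational functions in two indeterminates: Σ_{λ: |λ| = n} t^{2n(λ) − ℓ(λ)(ℓ(λ)−1)} · ((t;t)_{ℓ(λ)−1} / ∏_{i≥1} (t;t)_{m_i(λ)}) · ∏_{i=1}^{ℓ(λ)} (u − t^{i−1}) = (u^n − 1)/(1 − t^n), where the sum is over all partitions of n. (Note ∏_{i=1}^{ℓ} (u − t^{i−1}) = (u^{−1};t)_ℓ · u^ℓ.) -/

import Mathlib

open scoped BigOperators

/-- A partition: a weakly decreasing, finitely supported sequence of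
nonnegative integers, indexed from `0` (so `parts 0` is `λ₁`). -/
structure Ptn where
  parts : ℕ → ℕ
  antitone' : Antitone parts
  exists_zero : ∃ N, parts N = 0

namespace Ptn

/-- `|λ| = Σᵢ λᵢ`. -/
noncomputable def size (l : Ptn) : ℕ := ∑ᶠ j, l.parts j

/-- `ℓ(λ)`, the number of nonzero parts. -/
noncomputable def len (l : Ptn) : ℕ := Set.ncard {j | l.parts j ≠ 0}

/-- `n(λ) = Σᵢ (i-1) λᵢ` (with 1-based `i`). -/
noncomputable def nstat (l : Ptn) : ℕ := ∑ᶠ j, j * l.parts j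

/-- `λ'ᵢ = #{j : λⱼ ≥ i}`, the transpose partition (meaningful for `i ≥ 1`). -/
noncomputable def conj (l : Ptn) (i : ℕ) : ℕ := Set.ncard {j | i ≤ l.parts j}

/-- `mᵢ(λ) = #{j : λⱼ = i}` (meaningful for `i ≥ 1`). -/
noncomputable def mult (l : Ptn) (i : ℕ) : ℕ := Set.ncard {j | l.parts j = i}

/-- The partition `(1^n)`. -/
def onePow (n : ℕ) : Ptn where
  parts := fun j => if j < n then 1 else 0
  antitone' := by
    intro a b hab
    simp only
    split_ifs <;> omega
  exists_zero := ⟨n, by simp⟩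

/-- The one-row partition `(n)`. -/
def single (n : ℕ) : Ptn where
  parts := fun j => if j = 0 then n else 0
  antitone' := by
    intro a b hab
    simp only
    split_ifs <;> omega
  exists_zero := ⟨n + 1, by simp⟩

/-- The empty partition. -/
def empty : Ptn := onePow 0

end Ptn

/-- The q-Pochhammer symbol `(x;t)_n = ∏_{i=1}^n (1 - x t^{i-1})`. -/
def qPoch {K : Type*} [CommRing K] (x t : K) (n : ℕ) : K :=
  ∏ i ∈ Finset.range n, (1 - x * t ^ i)

/-- The Gaussian binomial coefficient `[n choose r]_t`, zero for `r > n`. -/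
noncomputable def qBinom {K : Type*} [Field K] (t : K) (n r : ℕ) : K :=
  if r ≤ n then qPoch t t n / (qPoch t t r * qPoch t t (n - r)) else 0

/-- The Gaussian binomial coefficient with integer arguments,
zero outside `0 ≤ r ≤ n`. -/
noncomputable def qBinomZ {K : Type*} [Field K] (t : K) (n r : ℤ) : K :=
  if 0 ≤ r ∧ r ≤ n then
    qPoch t t n.toNat / (qPoch t t r.toNat * qPoch t t (n - r).toNat)
  else 0

/-- `I_λ = ⊕ᵢ k[X]/(X^{λᵢ})`, a module over `k[X]` on which `X` acts nilpotently. -/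
def Imod (k : Type*) [Field k] (l : Ptn) : Type _ :=
  ∀ i : Fin l.len, Polynomial k ⧸ Ideal.span {(Polynomial.X : Polynomial k) ^ l.parts (i : ℕ)}

noncomputable instance (k : Type*) [Field k] (l : Ptn) : AddCommGroup (Imod k l) :=
  inferInstanceAs (AddCommGroup
    (∀ i : Fin l.len, Polynomial k ⧸ Ideal.span {(Polynomial.X : Polynomial k) ^ l.parts (i : ℕ)}))

noncomputable instance (k : Type*) [Field k] (l : Ptn) : Module (Polynomial k) (Imod k l) :=
  inferInstanceAs (Module (Polynomial k)
    (∀ i : Fin l.len, Polynomial k ⧸ Ideal.span {(Polynomial.X : Polynomial k) ^ l.parts (i : ℕ)}))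

/-- The Hall number `g^λ_{μ,ν}`: the number of `k[X]`-submodules `N ⊆ I_λ` with
`N ≅ I_ν` and `I_λ/N ≅ I_μ`. -/
noncomputable def hallNum (k : Type*) [Field k] (l m n : Ptn) : ℕ :=
  Nat.card {N : Submodule (Polynomial k) (Imod k l) //
    Nonempty ((↥N) ≃ₗ[Polynomial k] Imod k n) ∧
    Nonempty ((Imod k l ⧸ N) ≃ₗ[Polynomial k] Imod k m)}

/-- `a_λ`, the number of `k[X]`-module automorphisms of `I_λ`. -/
noncomputable def aut (k : Type*) [Field k] (l : Ptn) : ℕ :=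
  Nat.card (Imod k l ≃ₗ[Polynomial k] Imod k l)

/-- The indeterminate `t` in the rational function field `ℚ(t,u) = (ℚ(t))(u)`. -/
noncomputable def tVar : RatFunc (RatFunc ℚ) := RatFunc.C RatFunc.X

/-- The indeterminate `u` in the rational function field `ℚ(t,u) = (ℚ(t))(u)`. -/
noncomputable def uVar : RatFunc (RatFunc ℚ) := RatFunc.X

/-!
Group the partitions of `n` by their length `k` and remove the first column: `λ ↦ ν` with
`νᵢ = λᵢ - 1` is a bijection onto the partitions of `n - k` of length at most `k`, under which
`2n(λ) - k(k-1) = 2n(ν)` and `b_λ(t) = (t;t)_{k-ℓ(ν)} b_ν(t)`, where `b_λ(t) = ∏ᵢ (t;t)_{mᵢ(λ)}`.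
This gives a recursion for the length-graded sums `S(m, k)` of `t^{2n(λ)-k(k-1)} / b_λ(t)`,
which the `q`-Vandermonde identity solves: `S(m + 1, k + 1) = [m, k]_t / (t;t)_{k+1}`.
Hence the coefficient of `∏_{i<k} (u - t^i)` on the left is `[n, k]_t / (1 - t^n)`, and the
`q`-analogue `u^n = Σ_k [n, k]_t ∏_{i<k} (u - t^i)` of Newton's expansion sums these terms to
`(u^n - 1) / (1 - t^n)`.
-/

open Finset

section QAnalogues

variable {K : Type*} [Field K]

@[simp] lemma qPoch_zero (x t : K) : qPoch x t 0 = 1 := prod_range_zero _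

variable (t : K)

lemma qPoch_self_succ (n : ℕ) : qPoch t t (n + 1) = qPoch t t n * (1 - t ^ (n + 1)) := by
  rw [qPoch, prod_range_succ, ← pow_succ']
  rfl

lemma qBinom_of_le {n k : ℕ} (h : k ≤ n) :
    qBinom t n k = qPoch t t n / (qPoch t t k * qPoch t t (n - k)) :=
  if_pos h

lemma qBinom_of_lt {n k : ℕ} (h : n < k) : qBinom t n k = 0 :=
  if_neg h.not_ge

lemma qBinom_symm {n k : ℕ} (h : k ≤ n) : qBinom t n (n - k) = qBinom t n k := by
  rw [qBinom_of_le t h, qBinom_of_le t (n.sub_le k), Nat.sub_sub_self h, mul_comm]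

variable {t}

lemma one_sub_pow_ne_zero (ht : ¬IsOfFinOrder t) {n : ℕ} (hn : n ≠ 0) : 1 - t ^ n ≠ 0 :=
  sub_ne_zero.2 fun h => ht <| isOfFinOrder_iff_pow_eq_one.2 ⟨n, Nat.pos_of_ne_zero hn, h.symm⟩

lemma qPoch_self_ne_zero (ht : ¬IsOfFinOrder t) (n : ℕ) : qPoch t t n ≠ 0 := by
  induction n with
  | zero => simp
  | succ n ih =>
    rw [qPoch_self_succ]
    exact mul_ne_zero ih (one_sub_pow_ne_zero ht n.add_one_ne_zero)

lemma qBinom_zero_right (ht : ¬IsOfFinOrder t) (n : ℕ) : qBinom t n 0 = 1 := by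
  rw [qBinom_of_le t n.zero_le, Nat.sub_zero, qPoch_zero, one_mul,
    div_self (qPoch_self_ne_zero ht n)]

lemma qBinom_self (ht : ¬IsOfFinOrder t) (n : ℕ) : qBinom t n n = 1 := by
  rw [qBinom_of_le t le_rfl, Nat.sub_self, qPoch_zero, mul_one,
    div_self (qPoch_self_ne_zero ht n)]

lemma qBinom_mul_qPoch (ht : ¬IsOfFinOrder t) {n k : ℕ} (h : k ≤ n) :
    qBinom t n k * (qPoch t t k * qPoch t t (n - k)) = qPoch t t n := by
  rw [qBinom_of_le t h, div_mul_cancel₀ _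
    (mul_ne_zero (qPoch_self_ne_zero ht k) (qPoch_self_ne_zero ht (n - k)))]

lemma one_sub_pow_succ_mul_qBinom (ht : ¬IsOfFinOrder t) (n k : ℕ) :
    (1 - t ^ (n + 1)) * qBinom t n k = qBinom t (n + 1) (k + 1) * (1 - t ^ (k + 1)) := by
  rcases le_or_gt k n with h | h
  · have h₁ := qBinom_mul_qPoch ht h
    have h₂ := qBinom_mul_qPoch ht (Nat.succ_le_succ h)
    rw [Nat.succ_sub_succ, qPoch_self_succ, qPoch_self_succ] at h₂
    refine mul_right_cancel₀ (mul_ne_zero (qPoch_self_ne_zero ht k)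
      (qPoch_self_ne_zero ht (n - k))) ?_
    linear_combination (1 - t ^ (n + 1)) * h₁ - h₂
  · rw [qBinom_of_lt t h, qBinom_of_lt t (Nat.succ_lt_succ h), mul_zero, zero_mul]

lemma one_sub_pow_sub_mul_qBinom (ht : ¬IsOfFinOrder t) (n k : ℕ) :
    (1 - t ^ (n - k)) * qBinom t n k = qBinom t n (k + 1) * (1 - t ^ (k + 1)) := by
  rcases lt_or_ge k n with h | h
  · obtain ⟨d, rfl⟩ := Nat.exists_eq_add_of_lt h
    have h₁ := qBinom_mul_qPoch ht h.le
    have h₂ := qBinom_mul_qPoch ht h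
    rw [show k + d + 1 - k = d + 1 by omega] at h₁ ⊢
    rw [qPoch_self_succ] at h₁
    rw [show k + d + 1 - (k + 1) = d by omega, qPoch_self_succ] at h₂
    refine mul_right_cancel₀ (mul_ne_zero (qPoch_self_ne_zero ht k) (qPoch_self_ne_zero ht d)) ?_
    linear_combination h₁ - h₂
  · rw [qBinom_of_lt t (Nat.lt_succ_of_le h), Nat.sub_eq_zero_of_le h, pow_zero, sub_self,
      zero_mul, zero_mul]

-- The two `q`-Pascal rules follow from the two absorption identities above after multiplying
-- by `1 - t ^ (k + 1)`.
lemma qBinom_succ_succ (ht : ¬IsOfFinOrder t) (n k : ℕ) :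
    qBinom t (n + 1) (k + 1) = qBinom t n k + t ^ (k + 1) * qBinom t n (k + 1) := by
  rcases le_or_gt k n with h | h
  · have hpow : t ^ (k + 1) * t ^ (n - k) = t ^ (n + 1) := by rw [← pow_add]; congr 1; omega
    refine mul_right_cancel₀ (one_sub_pow_ne_zero ht k.add_one_ne_zero) ?_
    linear_combination -one_sub_pow_succ_mul_qBinom ht n k +
      t ^ (k + 1) * one_sub_pow_sub_mul_qBinom ht n k + qBinom t n k * hpow
  · simp [qBinom_of_lt t h, qBinom_of_lt t (Nat.succ_lt_succ h),
      qBinom_of_lt t (h.trans k.lt_succ_self)]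

lemma qBinom_succ_succ' (ht : ¬IsOfFinOrder t) (n k : ℕ) :
    qBinom t (n + 1) (k + 1) = qBinom t n (k + 1) + t ^ (n - k) * qBinom t n k := by
  rcases le_or_gt k n with h | h
  · have hpow : t ^ (k + 1) * t ^ (n - k) = t ^ (n + 1) := by rw [← pow_add]; congr 1; omega
    refine mul_right_cancel₀ (one_sub_pow_ne_zero ht k.add_one_ne_zero) ?_
    linear_combination -one_sub_pow_succ_mul_qBinom ht n k +
      one_sub_pow_sub_mul_qBinom ht n k + qBinom t n k * hpow
  · simp [qBinom_of_lt t h, qBinom_of_lt t (Nat.succ_lt_succ h),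
      qBinom_of_lt t (h.trans k.lt_succ_self)]

/-- The `q`-Vandermonde identity. The truncated subtraction `b - p.2` only matters in terms
with `qBinom t b p.2 = 0`. -/
theorem qBinom_add (ht : ¬IsOfFinOrder t) (a b r : ℕ) :
    qBinom t (a + b) r =
      ∑ p ∈ antidiagonal r, t ^ (p.1 * (b - p.2)) * qBinom t a p.1 * qBinom t b p.2 := by
  induction a generalizing r with
  | zero =>
    cases r with
    | zero => simp [qBinom_zero_right ht]
    | succ s =>
      simp [Nat.sum_antidiagonal_succ, qBinom_zero_right ht, qBinom_of_lt t (Nat.succ_pos _)]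
  | succ a ih =>
    cases r with
    | zero => simp [qBinom_zero_right ht]
    | succ s =>
      have hterm : ∀ p ∈ antidiagonal s,
          t ^ ((p.1 + 1) * (b - p.2)) * (t ^ (a - p.1) * qBinom t a p.1) * qBinom t b p.2 =
            t ^ (a + b - s) * (t ^ (p.1 * (b - p.2)) * qBinom t a p.1 * qBinom t b p.2) := by
        rintro ⟨i, j⟩ hij
        rw [HasAntidiagonal.mem_antidiagonal] at hij
        subst hij
        rcases lt_or_ge a i with hi | hi
        · simp [qBinom_of_lt t hi]
        rcases lt_or_ge b j with hj | hj
        · simp [qBinom_of_lt t hj]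
        obtain ⟨c, rfl⟩ := Nat.exists_eq_add_of_le hi
        obtain ⟨d, rfl⟩ := Nat.exists_eq_add_of_le hj
        rw [show i + c + (j + d) - (i + j) = c + d by omega, Nat.add_sub_cancel_left,
          Nat.add_sub_cancel_left]
        ring
      rw [add_right_comm, qBinom_succ_succ' ht, ih, ih, Nat.sum_antidiagonal_succ,
        Nat.sum_antidiagonal_succ, mul_sum, ← sum_congr rfl hterm]
      simp only [qBinom_succ_succ' ht, qBinom_zero_right ht, mul_add, add_mul, sum_add_distrib]
      ring

lemma sum_range_pow_mul_qBinom_mul_qBinom (ht : ¬IsOfFinOrder t) (a b : ℕ) :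
    ∑ j ∈ range a, t ^ ((j + 1) * j) * qBinom t a (j + 1) * qBinom t b j =
      qBinom t (a + b) (b + 1) := by
  set f := fun j => t ^ ((j + 1) * j) * qBinom t a (j + 1) * qBinom t b j
  calc ∑ j ∈ range a, f j
      = ∑ j ∈ range (a + b + 1), f j :=
        sum_subset (range_subset_range.2 (by omega)) fun j _ hj => by
          simp [f, qBinom_of_lt t (show a < j + 1 by simpa using hj)]
    _ = ∑ j ∈ range (b + 1), f j :=
        (sum_subset (range_subset_range.2 (by omega)) fun j _ hj => by
          simp [f, qBinom_of_lt t (show b < j by simpa [Nat.lt_succ_iff] using hj)]).symm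
    _ = ∑ p ∈ antidiagonal b,
          t ^ ((p.1 + 1) * (b - p.2)) * qBinom t a (p.1 + 1) * qBinom t b p.2 := by
        rw [Nat.sum_antidiagonal_eq_sum_range_succ
          fun i j => t ^ ((i + 1) * (b - j)) * qBinom t a (i + 1) * qBinom t b j]
        refine sum_congr rfl fun j hj => ?_
        have hj : j ≤ b := Nat.lt_succ_iff.1 (mem_range.1 hj)
        rw [Nat.sub_sub_self hj, qBinom_symm t hj]
    _ = qBinom t (a + b) (b + 1) := by
        rw [qBinom_add ht, Nat.sum_antidiagonal_succ, qBinom_of_lt t b.lt_succ_self]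
        simp

theorem pow_eq_sum_qBinom_mul_prod (ht : ¬IsOfFinOrder t) (u : K) (n : ℕ) :
    u ^ n = ∑ k ∈ range (n + 1), qBinom t n k * ∏ i ∈ range k, (u - t ^ i) := by
  induction n with
  | zero => simp [qBinom_zero_right ht]
  | succ n ih =>
    have hshift : ∑ k ∈ range (n + 1), qBinom t n k * (t ^ k * ∏ i ∈ range k, (u - t ^ i)) =
        1 + ∑ k ∈ range (n + 1), t ^ (k + 1) * qBinom t n (k + 1) *
          ∏ i ∈ range (k + 1), (u - t ^ i) := by
      rw [sum_range_succ', sum_range_succ _ n, qBinom_of_lt t n.lt_succ_self]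
      simp only [qBinom_zero_right ht, pow_zero, prod_range_zero, mul_one, mul_zero, zero_mul,
        zero_add, add_comm]
      exact congrArg (1 + ·) (sum_congr rfl fun k _ => by ring)
    calc u ^ (n + 1)
        = ∑ k ∈ range (n + 1), qBinom t n k *
            (∏ i ∈ range (k + 1), (u - t ^ i) + t ^ k * ∏ i ∈ range k, (u - t ^ i)) := by
          rw [pow_succ', ih, mul_sum]
          refine sum_congr rfl fun k _ => ?_
          rw [prod_range_succ]
          ring
      _ = _ := by
          rw [sum_range_succ' _ (n + 1), qBinom_zero_right ht]
          simp only [qBinom_succ_succ ht, mul_add, add_mul, sum_add_distrib, hshift,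
            range_zero, prod_empty, mul_one]
          ring

end QAnalogues

namespace Ptn

@[ext] lemma ext {l m : Ptn} (h : ∀ j, l.parts j = m.parts j) : l = m := by
  cases l
  cases m
  simpa using funext h

section Basic

variable (l : Ptn)

lemma parts_ne_zero_iff {j : ℕ} : l.parts j ≠ 0 ↔ j < l.len := by
  have hsupp : {j | l.parts j ≠ 0} = Set.Iio (Nat.find l.exists_zero) := by
    ext j
    show l.parts j ≠ 0 ↔ j < _
    refine ⟨fun h => lt_of_not_ge fun hj => h ?_, fun hj => Nat.find_min l.exists_zero hj⟩
    exact Nat.eq_zero_of_le_zero (Nat.find_spec l.exists_zero ▸ l.antitone' hj)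
  rw [len, hsupp, Set.ncard_Iio_nat]
  exact Set.ext_iff.1 hsupp j

lemma parts_eq_zero_iff {j : ℕ} : l.parts j = 0 ↔ l.len ≤ j := by
  rw [← not_lt, ← l.parts_ne_zero_iff, not_not]

lemma size_eq_sum_range {N : ℕ} (h : l.len ≤ N) : l.size = ∑ j ∈ range N, l.parts j :=
  finsum_eq_sum_of_support_subset _ fun j hj => by
    simpa using (l.parts_ne_zero_iff.1 hj).trans_le h

lemma nstat_eq_sum_range {N : ℕ} (h : l.len ≤ N) : l.nstat = ∑ j ∈ range N, j * l.parts j :=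
  finsum_eq_sum_of_support_subset _ fun j hj => by
    simpa using (l.parts_ne_zero_iff.1 (right_ne_zero_of_mul hj)).trans_le h

lemma len_le_size : l.len ≤ l.size := by
  rw [l.size_eq_sum_range le_rfl]
  simpa using card_nsmul_le_sum _ _ 1 fun j hj =>
    Nat.one_le_iff_ne_zero.2 (l.parts_ne_zero_iff.2 (mem_range.1 hj))

lemma parts_le_size (j : ℕ) : l.parts j ≤ l.size := by
  rcases lt_or_ge j l.len with h | h
  · rw [l.size_eq_sum_range le_rfl]
    exact single_le_sum (fun _ _ => Nat.zero_le _) (mem_range.2 h)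
  · simp [l.parts_eq_zero_iff.2 h]

lemma len_eq_zero_iff : l.len = 0 ↔ l.size = 0 :=
  ⟨fun h => by simp [l.size_eq_sum_range h.le], fun h => Nat.eq_zero_of_le_zero (h ▸ l.len_le_size)⟩

lemma mult_eq_zero_of_size_lt {i : ℕ} (h : l.size < i) : l.mult i = 0 := by
  have : {j | l.parts j = i} = ∅ := Set.eq_empty_of_forall_notMem fun j (hj : l.parts j = i) =>
    (l.parts_le_size j).not_gt (hj ▸ h)
  rw [mult, this, Set.ncard_empty]

lemma len_empty : empty.len = 0 := Nat.eq_zero_of_le_zero (empty.parts_eq_zero_iff.1 rfl)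

end Basic

lemma finite_setOf_size (n : ℕ) : {l : Ptn | l.size = n}.Finite := by
  have hinj : Set.InjOn (fun l : Ptn => fun j : Fin (n + 1) => l.parts j) {l | l.size = n} := by
    intro l₁ h₁ l₂ h₂ h
    ext j
    rcases lt_or_ge j (n + 1) with hj | hj
    · exact congrFun h ⟨j, hj⟩
    · have h₁ : l₁.len ≤ n := h₁ ▸ l₁.len_le_size
      have h₂ : l₂.len ≤ n := h₂ ▸ l₂.len_le_size
      rw [l₁.parts_eq_zero_iff.2 (by omega), l₂.parts_eq_zero_iff.2 (by omega)]
  refine Set.Finite.of_finite_image ?_ hinj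
  refine (Set.Finite.pi fun _ => Set.finite_Iic n).subset ?_
  rintro _ ⟨l, rfl, rfl⟩ j -
  exact l.parts_le_size j

noncomputable def ofSize (n : ℕ) : Finset Ptn := (finite_setOf_size n).toFinset

@[simp] lemma mem_ofSize {l : Ptn} {n : ℕ} : l ∈ ofSize n ↔ l.size = n :=
  Set.Finite.mem_toFinset _

lemma finsum_size_eq_sum {M : Type*} [AddCommMonoid M] (f : Ptn → M) (n : ℕ) :
    ∑ᶠ (l : Ptn) (_ : l.size = n), f l = ∑ l ∈ ofSize n, f l :=
  finsum_mem_eq_finite_toFinset_sum f (finite_setOf_size n)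

lemma ofSize_zero : ofSize 0 = {empty} := by
  ext l
  rw [mem_ofSize, mem_singleton]
  refine ⟨fun h => Ptn.ext fun j => ?_, fun h => h ▸ (len_eq_zero_iff _).1 len_empty⟩
  simpa [empty, onePow, h] using l.parts_le_size j

section Column

variable (l : Ptn)

def removeColumn : Ptn where
  parts j := l.parts j - 1
  antitone' _ _ h := Nat.sub_le_sub_right (l.antitone' h) 1
  exists_zero := l.exists_zero.imp fun _ h => by simp [h]

def addColumn (k : ℕ) (ν : Ptn) : Ptn where
  parts j := if j < k then ν.parts j + 1 else 0
  antitone' a b h := by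
    dsimp only
    split_ifs
    · exact Nat.add_le_add_right (ν.antitone' h) 1
    all_goals omega
  exists_zero := ⟨k, by simp⟩

lemma removeColumn_parts (j : ℕ) : l.removeColumn.parts j = l.parts j - 1 := rfl

lemma addColumn_parts (k : ℕ) (ν : Ptn) (j : ℕ) :
    (ν.addColumn k).parts j = if j < k then ν.parts j + 1 else 0 := rfl

lemma len_removeColumn_le : l.removeColumn.len ≤ l.len := by
  by_contra! h
  have := l.removeColumn.parts_ne_zero_iff.2 h
  rw [removeColumn_parts, l.parts_eq_zero_iff.2 le_rfl] at this
  exact this rfl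

lemma parts_eq_removeColumn_parts_add_one {j : ℕ} (h : j < l.len) :
    l.parts j = l.removeColumn.parts j + 1 := by
  have := l.parts_ne_zero_iff.2 h
  rw [removeColumn_parts]
  omega

lemma size_removeColumn_add_len : l.removeColumn.size + l.len = l.size := by
  rw [l.size_eq_sum_range le_rfl, l.removeColumn.size_eq_sum_range l.len_removeColumn_le,
    sum_congr rfl fun j hj => l.parts_eq_removeColumn_parts_add_one (mem_range.1 hj),
    sum_add_distrib]
  simp

lemma two_mul_nstat : 2 * l.nstat = 2 * l.removeColumn.nstat + l.len * (l.len - 1) := by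
  rw [l.nstat_eq_sum_range le_rfl, l.removeColumn.nstat_eq_sum_range l.len_removeColumn_le,
    ← sum_range_id_mul_two, mul_sum, mul_sum, sum_mul, ← sum_add_distrib]
  refine sum_congr rfl fun j hj => ?_
  rw [l.parts_eq_removeColumn_parts_add_one (mem_range.1 hj)]
  ring

lemma mult_one : l.mult 1 = l.len - l.removeColumn.len := by
  have : {j | l.parts j = 1} = Set.Ico l.removeColumn.len l.len := by
    ext j
    have h₁ := l.parts_eq_zero_iff (j := j)
    have h₂ := l.removeColumn.parts_eq_zero_iff (j := j)
    rw [removeColumn_parts] at h₂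
    show l.parts j = 1 ↔ _ ∧ _
    omega
  rw [mult, this, Set.ncard_Ico_nat]

lemma mult_add_two (i : ℕ) : l.mult (i + 2) = l.removeColumn.mult (i + 1) := by
  simp only [mult, removeColumn_parts]
  congr 1
  ext j
  show l.parts j = i + 2 ↔ l.parts j - 1 = i + 1
  omega

lemma len_addColumn (k : ℕ) (ν : Ptn) : (ν.addColumn k).len = k := by
  refine le_antisymm ((ν.addColumn k).parts_eq_zero_iff.1 (by simp [addColumn_parts])) ?_
  by_contra! h
  have := (ν.addColumn k).parts_eq_zero_iff.2 le_rfl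
  simp [addColumn_parts, h] at this

lemma removeColumn_addColumn {k : ℕ} {ν : Ptn} (h : ν.len ≤ k) :
    (ν.addColumn k).removeColumn = ν := by
  ext j
  rw [removeColumn_parts, addColumn_parts]
  split_ifs with hj
  · rfl
  · exact (ν.parts_eq_zero_iff.2 (by omega)).symm

lemma addColumn_removeColumn : l.removeColumn.addColumn l.len = l := by
  ext j
  rw [addColumn_parts]
  split_ifs with hj
  · exact (l.parts_eq_removeColumn_parts_add_one hj).symm
  · exact (l.parts_eq_zero_iff.2 (not_lt.1 hj)).symm

lemma sum_filter_len_eq_sum_addColumn {M : Type*} [AddCommMonoid M] (f : Ptn → M) (m k : ℕ) :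
    ∑ l ∈ (ofSize (m + k)).filter (·.len = k), f l =
      ∑ ν ∈ (ofSize m).filter (·.len ≤ k), f (ν.addColumn k) := by
  refine sum_nbij' removeColumn (addColumn k) ?_ ?_ ?_ ?_ ?_ <;>
    simp only [mem_filter, mem_ofSize, and_imp]
  · intro l hl hk
    have := l.size_removeColumn_add_len
    exact ⟨by omega, hk ▸ l.len_removeColumn_le⟩
  · intro ν hν hk
    have := (ν.addColumn k).size_removeColumn_add_len
    rw [removeColumn_addColumn hk, len_addColumn] at this
    exact ⟨by omega, len_addColumn k ν⟩
  · intro l _ hk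
    exact hk ▸ l.addColumn_removeColumn
  · intro ν _ hk
    exact removeColumn_addColumn hk
  · intro l _ hk
    rw [← hk, addColumn_removeColumn]

end Column

section Weight

variable {K : Type*} [Field K] (t : K)

/-- `b_λ(t)` in Macdonald's notation. -/
noncomputable def multPoch (l : Ptn) : K := ∏ᶠ i : ℕ, qPoch t t (l.mult (i + 1))

lemma multPoch_eq_prod_range (l : Ptn) {N : ℕ} (h : l.size ≤ N) :
    l.multPoch t = ∏ i ∈ range N, qPoch t t (l.mult (i + 1)) := by
  refine finprod_eq_prod_of_mulSupport_subset _ fun i hi => ?_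
  by_contra hN
  rw [coe_range, Set.mem_Iio, not_lt] at hN
  exact hi (show qPoch t t (l.mult (i + 1)) = 1 by
    rw [l.mult_eq_zero_of_size_lt (by omega), qPoch_zero])

lemma multPoch_eq_mul_multPoch_removeColumn (l : Ptn) :
    l.multPoch t = qPoch t t (l.len - l.removeColumn.len) * l.removeColumn.multPoch t := by
  have hsize := l.size_removeColumn_add_len
  rw [l.multPoch_eq_prod_range t (Nat.le_succ l.size), prod_range_succ',
    l.removeColumn.multPoch_eq_prod_range t (N := l.size) (by omega), mult_one, mul_comm]
  simp only [mult_add_two]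

/-- `t ^ (2n(λ) - ℓ(λ)(ℓ(λ) - 1)) / b_λ(t)`: by `two_mul_nstat`, the exponent is `2n` of `λ` with
its first column removed. -/
noncomputable def weight (l : Ptn) : K := t ^ (2 * l.removeColumn.nstat) / l.multPoch t

lemma zpow_two_mul_nstat_sub (l : Ptn) :
    t ^ ((2 * l.nstat : ℤ) - l.len * ((l.len : ℤ) - 1)) = t ^ (2 * l.removeColumn.nstat) := by
  rw [← zpow_natCast]
  congr 1
  rcases Nat.eq_zero_or_pos l.len with h0 | hpos
  · have h := l.two_mul_nstat
    simp only [h0, zero_mul, add_zero] at h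
    simp only [h0, CharP.cast_eq_zero, zero_mul, sub_zero]
    omega
  · have h : (2 * l.nstat : ℤ) = 2 * l.removeColumn.nstat + l.len * ((l.len : ℤ) - 1) := by
      rw [← Nat.cast_pred hpos]
      exact_mod_cast l.two_mul_nstat
    push_cast
    linarith

lemma weight_addColumn {k : ℕ} {ν : Ptn} (h : ν.len ≤ k) :
    (ν.addColumn k).weight t = t ^ (ν.len * (ν.len - 1)) * ν.weight t / qPoch t t (k - ν.len) := by
  rw [weight, multPoch_eq_mul_multPoch_removeColumn, removeColumn_addColumn h, len_addColumn,
    weight, ν.two_mul_nstat, pow_add]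
  ring

noncomputable def weightSum (m k : ℕ) : K := ∑ l ∈ (ofSize m).filter (·.len = k), l.weight t

lemma sum_ofSize_eq_sum_weightSum (f : ℕ → K) (m : ℕ) :
    ∑ l ∈ ofSize m, f l.len * l.weight t = ∑ k ∈ range (m + 1), f k * weightSum t m k := by
  rw [← sum_fiberwise_of_maps_to (g := len) (t := range (m + 1))
    fun l hl => mem_range_succ_iff.2 (l.len_le_size.trans_eq ((mem_ofSize).1 hl))]
  refine sum_congr rfl fun k _ => ?_
  rw [weightSum, mul_sum]
  exact sum_congr rfl fun l hl => by rw [(mem_filter.1 hl).2]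

lemma weightSum_add_self (m k : ℕ) :
    weightSum t (m + k) k =
      ∑ j ∈ range (k + 1), t ^ (j * (j - 1)) * weightSum t m j / qPoch t t (k - j) := by
  rw [weightSum, sum_filter_len_eq_sum_addColumn,
    ← sum_fiberwise_of_maps_to (g := len) (t := range (k + 1))
      fun ν hν => mem_range_succ_iff.2 (mem_filter.1 hν).2]
  refine sum_congr rfl fun j hj => ?_
  rw [weightSum, mul_sum, sum_div, filter_filter]
  refine sum_congr (filter_congr fun ν _ => ⟨And.right, fun h => ⟨h ▸ mem_range_succ_iff.1 hj, h⟩⟩)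
    fun ν hν => ?_
  obtain ⟨-, hlen⟩ := mem_filter.1 hν
  rw [weight_addColumn t (hlen ▸ mem_range_succ_iff.1 hj), hlen]

lemma weightSum_of_lt {m k : ℕ} (h : m < k) : weightSum t m k = 0 :=
  sum_eq_zero fun l hl => by
    obtain ⟨hm, hk⟩ := mem_filter.1 hl
    exact absurd (hk ▸ mem_ofSize.1 hm ▸ l.len_le_size) h.not_ge

lemma weightSum_succ_zero (m : ℕ) : weightSum t (m + 1) 0 = 0 :=
  sum_eq_zero fun l hl => by
    obtain ⟨hm, hk⟩ := mem_filter.1 hl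
    exact absurd ((len_eq_zero_iff l).1 hk) (mem_ofSize.1 hm ▸ m.succ_ne_zero)

lemma weightSum_zero_zero : weightSum t 0 0 = 1 := by
  have hsize : empty.size = 0 := (len_eq_zero_iff _).1 len_empty
  have hnstat : empty.removeColumn.nstat = 0 := by
    rw [empty.removeColumn.nstat_eq_sum_range (N := 0) (len_empty ▸ empty.len_removeColumn_le),
      range_zero, sum_empty]
  rw [weightSum, ofSize_zero, filter_singleton, if_pos len_empty, sum_singleton, weight,
    multPoch_eq_prod_range t _ hsize.le, hnstat]
  simp

variable {t}

theorem weightSum_succ_succ (ht : ¬IsOfFinOrder t) (m k : ℕ) :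
    weightSum t (m + 1) (k + 1) = qBinom t m k / qPoch t t (k + 1) := by
  induction m using Nat.strong_induction_on generalizing k with
  | _ m ih =>
  rcases lt_or_ge m k with h | h
  · rw [weightSum_of_lt t (by omega), qBinom_of_lt t h, zero_div]
  obtain ⟨d, rfl⟩ := Nat.exists_eq_add_of_le' h
  rw [add_assoc, weightSum_add_self]
  cases d with
  | zero =>
    rw [sum_eq_single 0 (fun j _ hj => by simp [weightSum_of_lt t (Nat.pos_of_ne_zero hj)])
      (by simp), weightSum_zero_zero, zero_add, qBinom_self ht]
    simp
  | succ e =>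
    have hterm : ∀ j ∈ range (k + 1),
        t ^ ((j + 1) * (j + 1 - 1)) * weightSum t (e + 1) (j + 1) / qPoch t t (k + 1 - (j + 1)) =
          t ^ ((j + 1) * j) * qBinom t (k + 1) (j + 1) * qBinom t e j / qPoch t t (k + 1) := by
      intro j hj
      have hjk : j + 1 ≤ k + 1 := Nat.succ_le_succ (mem_range_succ_iff.1 hj)
      have h₁ := qPoch_self_ne_zero ht (j + 1)
      have h₂ := qPoch_self_ne_zero ht (k + 1 - (j + 1))
      rw [ih e (by omega) j, Nat.add_sub_cancel, eq_div_iff (qPoch_self_ne_zero ht _),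
        ← qBinom_mul_qPoch ht hjk]
      field_simp
    rw [sum_range_succ', weightSum_succ_zero, mul_zero, zero_div, add_zero, sum_congr rfl hterm,
      ← sum_div, sum_range_pow_mul_qBinom_mul_qBinom ht,
      ← qBinom_symm t (Nat.le_add_left k (e + 1)), Nat.add_sub_cancel,
      show k + 1 + e = e + 1 + k by ring]

theorem sum_ofSize_succ (ht : ¬IsOfFinOrder t) (u : K) (m : ℕ) :
    ∑ l ∈ ofSize (m + 1), qPoch t t (l.len - 1) * (∏ i ∈ range l.len, (u - t ^ i)) * l.weight t =
      (u ^ (m + 1) - 1) / (1 - t ^ (m + 1)) := by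
  rw [sum_ofSize_eq_sum_weightSum t fun k => qPoch t t (k - 1) * ∏ i ∈ range k, (u - t ^ i),
    sum_range_succ', weightSum_succ_zero, mul_zero, add_zero,
    eq_div_iff (one_sub_pow_ne_zero ht m.add_one_ne_zero), pow_eq_sum_qBinom_mul_prod ht u,
    sum_range_succ' _ (m + 1), qBinom_zero_right ht, sum_mul]
  simp only [range_zero, prod_empty, mul_one, add_sub_cancel_right, Nat.add_sub_cancel]
  refine sum_congr rfl fun k _ => ?_
  rw [weightSum_succ_succ ht, qPoch_self_succ]
  have h₁ := qPoch_self_ne_zero ht k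
  have h₂ := one_sub_pow_ne_zero ht k.add_one_ne_zero
  field_simp
  linear_combination (∏ i ∈ range (k + 1), (u - t ^ i)) * one_sub_pow_succ_mul_qBinom ht m k

end Weight

end Ptn

lemma not_isOfFinOrder_tVar : ¬IsOfFinOrder tVar := by
  let f : Polynomial ℚ →* RatFunc (RatFunc ℚ) :=
    (RatFunc.C : RatFunc ℚ →+* _).toMonoidHom.comp (algebraMap (Polynomial ℚ) (RatFunc ℚ))
  have hf : Function.Injective f :=
    (RatFunc.C : RatFunc ℚ →+* _).injective.comp (IsFractionRing.injective _ _)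
  have hX : f Polynomial.X = tVar := by simp [f, tVar, RatFunc.algebraMap_X]
  rw [← hX, hf.isOfFinOrder_iff]
  exact fun h => Polynomial.not_isUnit_X h.isUnit

/-- two-variable partition identity: for every `n ≥ 1`, in `ℚ(t,u)`,
`Σ_{|λ|=n} t^{2n(λ)−ℓ(λ)(ℓ(λ)−1)} ((t;t)_{ℓ(λ)−1}/∏_{i≥1}(t;t)_{m_i(λ)})
  ∏_{i=1}^{ℓ(λ)} (u − t^{i−1}) = (uⁿ − 1)/(1 − tⁿ)`. -/
theorem two_variable_partition_identity (n : ℕ) (hn : 1 ≤ n) :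
    ∑ᶠ (lam : Ptn) (_ : lam.size = n),
        tVar ^ ((2 * lam.nstat : ℤ) - (lam.len : ℤ) * ((lam.len : ℤ) - 1)) *
          (qPoch tVar tVar (lam.len - 1) / ∏ᶠ i : ℕ, qPoch tVar tVar (lam.mult (i + 1))) *
          ∏ i ∈ Finset.range lam.len, (uVar - tVar ^ i)
      = (uVar ^ n - 1) / (1 - tVar ^ n) := by
  obtain ⟨m, rfl⟩ := Nat.exists_eq_add_of_le' hn
  rw [Ptn.finsum_size_eq_sum, ← Ptn.sum_ofSize_succ not_isOfFinOrder_tVar uVar m]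
  refine sum_congr rfl fun l _ => ?_
  rw [Ptn.zpow_two_mul_nstat_sub, Ptn.weight, Ptn.multPoch]
  ring
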